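/- arXiv:2405.18690 — 3 statements merged into one kernel-verified Lean document; each statement's English description precedes it below -/
import Mathlib

section
/- Let {ψ^k}, {φ^k}, {a^k}, and {ϖ^k} be nonnegative real-valued random sequences adapted to a filtration {𝓕^k} such that E[ψ^{k+1} | 𝓕^k] ≤ (1 + a^k) ψ^k − φ^k + ϖ^k holds for all k ≥ 0, where 𝓕^k contains the information of ψ^ℓ, φ^ℓ, a^ℓ, ϖ^ℓ for 0 ≤ ℓ ≤ k. If Σ_{k=0}^∞ a^k < ∞ and Σ_{k=0}^∞ ϖ^k < ∞ almost surely, then almost surely Σ_{k=0}^∞ φ^k < ∞ and ψ^k converges to a finite nonnegative random variable. -/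
/-!
With `A_k = ∏_{j<k} (1 + a^j)`, the process `Y_k = ψ^k / A_k + ∑_{j<k} (φ^j - ϖ^j) / A_{j+1}`
is a supermartingale bounded below by `-∑_{j<k} ϖ^j`. Freezing it as soon as `∑_{j≤k} ϖ^j`
exceeds `M` gives a supermartingale bounded below by `-M`, hence L¹-bounded, so `Y` converges
almost surely on `{∑ ϖ^j ≤ M}` for every `M`, i.e. on `{∑ ϖ^j < ∞}`. Since `A_k` increases to a
finite limit when `∑ a^j < ∞`, boundedness of `Y` makes `∑ φ^j / A_{j+1}`, hence `∑ φ^j`, finite,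
and then `ψ^k = (Y_k - ∑_{j<k} (φ^j - ϖ^j) / A_{j+1}) A_k` converges.
-/

open MeasureTheory Filter

open scoped Topology

namespace MeasureTheory

variable {Ω : Type*} {m0 : MeasurableSpace Ω} {μ : Measure Ω} {ℱ : Filtration ℕ m0}

theorem Supermartingale.exists_ae_tendsto_of_const_le [IsFiniteMeasure μ]
    {f : ℕ → Ω → ℝ} {C : ℝ} (hf : Supermartingale f ℱ μ) (hC : ∀ n ω, C ≤ f n ω) :
    ∀ᵐ ω ∂μ, ∃ c, Tendsto (fun n => f n ω) atTop (𝓝 c) := by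
  set R := ∫ ω, f 0 ω ∂μ + 2 * |C| * μ.real Set.univ
  have habs : ∀ n ω, |f n ω| ≤ f n ω + 2 * |C| := fun n ω => by
    cases abs_cases (f n ω) <;> cases abs_cases C <;> linarith [hC n ω]
  have hL1 : ∀ n, ∫ ω, |f n ω| ∂μ ≤ R := fun n =>
    calc ∫ ω, |f n ω| ∂μ ≤ ∫ ω, (f n ω + 2 * |C|) ∂μ :=
          integral_mono (hf.integrable n).abs ((hf.integrable n).add (integrable_const _))
            (habs n)
      _ = ∫ ω, f n ω ∂μ + 2 * |C| * μ.real Set.univ := by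
          rw [integral_add (hf.integrable n) (integrable_const _), integral_const, smul_eq_mul,
            mul_comm]
      _ ≤ R := by
          have := hf.setIntegral_le (Nat.zero_le n) MeasurableSet.univ
          simp only [Measure.restrict_univ] at this
          linarith
  have hbdd : ∀ n, eLpNorm ((-f) n) 1 μ ≤ R.toNNReal := fun n => by
    rw [Pi.neg_apply, eLpNorm_neg, eLpNorm_one_eq_lintegral_enorm,
      ← ofReal_integral_norm_eq_lintegral_enorm (hf.integrable n)]
    exact ENNReal.ofReal_le_ofReal (hL1 n)
  filter_upwards [hf.neg.exists_ae_tendsto_of_bdd hbdd] with ω ⟨c, hc⟩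
  exact ⟨-c, by simpa using hc.neg⟩

theorem Supermartingale.add_sum_indicator_sub [IsFiniteMeasure μ] {f : ℕ → Ω → ℝ}
    (hf : Supermartingale f ℱ μ) {G : ℕ → Set Ω} (hG : ∀ n, MeasurableSet[ℱ n] (G n)) :
    Supermartingale (fun n => f 0 + ∑ k ∈ Finset.range n, (G k).indicator (f (k + 1) - f k))
      ℱ μ := by
  have hξ : StronglyAdapted ℱ fun k => (G k).indicator (1 : Ω → ℝ) := fun k =>
    stronglyMeasurable_one.indicator (hG k)
  have hsum := (hf.neg.sum_mul_sub hξ (R := 1) (fun k ω => Set.indicator_le_self' (by simp) ω)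
    fun k ω => Set.indicator_nonneg (by simp) ω).neg
  have h0 := martingale_const_fun ℱ μ (hf.stronglyAdapted 0) (hf.integrable 0)
  have heq : (fun n => f 0 + ∑ k ∈ Finset.range n, (G k).indicator (f (k + 1) - f k)) =
      (-fun n => ∑ k ∈ Finset.range n, (G k).indicator 1 * ((-f) (k + 1) - (-f) k)) +
        fun _ => f 0 := by
    funext n ω
    simp only [Pi.add_apply, Pi.neg_apply, Finset.sum_apply, Pi.mul_apply, Pi.sub_apply]
    rw [add_comm, ← Finset.sum_neg_distrib]
    congr 1
    refine Finset.sum_congr rfl fun k _ => ?_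
    by_cases hk : ω ∈ G k <;> simp [hk, neg_add_eq_sub]
  rw [heq]
  exact hsum.add_martingale h0

theorem Supermartingale.exists_ae_tendsto_of_sum_le_const [IsFiniteMeasure μ]
    {f w : ℕ → Ω → ℝ} (hf : Supermartingale f ℱ μ) (hw : Adapted ℱ w)
    (hw0 : ∀ n ω, 0 ≤ w n ω) (hfw : ∀ n ω, -∑ i ∈ Finset.range n, w i ω ≤ f n ω) (M : ℕ) :
    ∀ᵐ ω ∂μ, (∀ n, ∑ i ∈ Finset.range n, w i ω ≤ M) →
      ∃ c, Tendsto (fun n => f n ω) atTop (𝓝 c) := by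
  set G : ℕ → Set Ω := fun k => {ω | ∑ i ∈ Finset.range (k + 1), w i ω ≤ M}
  have hG : ∀ k, MeasurableSet[ℱ k] (G k) := fun k =>
    measurableSet_le (Finset.measurable_sum _ fun i hi =>
      (hw i).mono (ℱ.mono (Nat.lt_succ_iff.1 (Finset.mem_range.1 hi))) le_rfl) measurable_const
  have hG_anti : Antitone G := antitone_nat_of_succ_le fun k ω hω => by
    simp only [G, Set.mem_ofPred_eq, Finset.sum_range_succ _ (k + 1)] at hω ⊢
    exact (le_add_of_nonneg_right (hw0 _ ω)).trans hω
  -- `Z n = f (min n τ)` for `τ` the first `k` with `∑_{i≤k} w i > M`.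
  set Z := fun n => f 0 + ∑ k ∈ Finset.range n, (G k).indicator (f (k + 1) - f k)
  have hZ_succ : ∀ n ω, Z (n + 1) ω = Z n ω + (G n).indicator (f (n + 1) - f n) ω := fun n ω => by
    simp only [Z, Finset.sum_range_succ, Pi.add_apply, Finset.sum_apply, add_assoc]
  have hZ_eq : ∀ n ω, ω ∈ G n → Z (n + 1) ω = f (n + 1) ω := fun n ω hω => by
    have hterm : ∀ k ∈ Finset.range (n + 1), (G k).indicator (f (k + 1) - f k) ω =
        f (k + 1) ω - f k ω := fun k hk =>
      Set.indicator_of_mem (hG_anti (Nat.lt_succ_iff.1 (Finset.mem_range.1 hk)) hω) _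
    simp only [Z, Pi.add_apply, Finset.sum_apply, Finset.sum_congr rfl hterm,
      Finset.sum_range_sub (f · ω)]
    ring
  have hZ_lb : ∀ n ω, -(M : ℝ) ≤ Z n ω := by
    intro n ω
    induction n with
    | zero => simpa [Z] using (hfw 0 ω).trans' (by simp)
    | succ n ih =>
      by_cases hω : ω ∈ G n
      · rw [hZ_eq n ω hω]
        exact (neg_le_neg hω).trans (hfw (n + 1) ω)
      · rwa [hZ_succ, Set.indicator_of_notMem hω, add_zero]
  filter_upwards [(hf.add_sum_indicator_sub hG).exists_ae_tendsto_of_const_le hZ_lb]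
    with ω ⟨c, hc⟩ hωM
  refine ⟨c, hc.congr fun n => ?_⟩
  cases n with
  | zero => simp
  | succ n => exact hZ_eq n ω (hωM (n + 1))

theorem Supermartingale.exists_ae_tendsto_of_summable [IsFiniteMeasure μ]
    {f w : ℕ → Ω → ℝ} (hf : Supermartingale f ℱ μ) (hw : Adapted ℱ w)
    (hw0 : ∀ n ω, 0 ≤ w n ω) (hfw : ∀ n ω, -∑ i ∈ Finset.range n, w i ω ≤ f n ω) :
    ∀ᵐ ω ∂μ, Summable (fun n => w n ω) → ∃ c, Tendsto (fun n => f n ω) atTop (𝓝 c) := by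
  filter_upwards [ae_all_iff.2 (hf.exists_ae_tendsto_of_sum_le_const hw hw0 hfw)] with ω hω hs
  exact hω ⌈∑' i, w i ω⌉₊ fun n => (hs.sum_le_tsum _ fun i _ => hw0 i ω).trans (Nat.le_ceil _)

end MeasureTheory

namespace RobbinsSiegmund

def prodOneAdd (a : ℕ → ℝ) (k : ℕ) : ℝ := ∏ j ∈ Finset.range k, (1 + a j)

noncomputable def compensator (φ a ϖ : ℕ → ℝ) (k : ℕ) : ℝ :=
  ∑ j ∈ Finset.range k, (φ j - ϖ j) / prodOneAdd a (j + 1)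

noncomputable def normalized (ψ φ a ϖ : ℕ → ℝ) (k : ℕ) : ℝ :=
  ψ k / prodOneAdd a k + compensator φ a ϖ k

section Deterministic

variable {ψ φ a ϖ : ℕ → ℝ}

lemma prodOneAdd_succ (a : ℕ → ℝ) (k : ℕ) :
    prodOneAdd a (k + 1) = prodOneAdd a k * (1 + a k) :=
  Finset.prod_range_succ _ _

lemma one_le_prodOneAdd (ha : ∀ k, 0 ≤ a k) (k : ℕ) : 1 ≤ prodOneAdd a k :=
  Finset.one_le_prod fun j _ => le_add_of_nonneg_right (ha j)

lemma prodOneAdd_pos (ha : ∀ k, 0 ≤ a k) (k : ℕ) : 0 < prodOneAdd a k :=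
  one_pos.trans_le (one_le_prodOneAdd ha k)

lemma monotone_prodOneAdd (ha : ∀ k, 0 ≤ a k) : Monotone (prodOneAdd a) :=
  monotone_nat_of_le_succ fun k => by
    rw [prodOneAdd_succ]
    exact le_mul_of_one_le_right (prodOneAdd_pos ha k).le (le_add_of_nonneg_right (ha k))

lemma tendsto_prodOneAdd (has : Summable a) :
    Tendsto (prodOneAdd a) atTop (𝓝 (∏' k, (1 + a k))) :=
  (Real.multipliable_one_add_of_summable has).tendsto_prod_tprod_nat

lemma div_prodOneAdd_le (ha : ∀ k, 0 ≤ a k) {x : ℝ} (hx : 0 ≤ x) (k : ℕ) :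
    x / prodOneAdd a k ≤ x :=
  div_le_self hx (one_le_prodOneAdd ha k)

lemma compensator_succ (φ a ϖ : ℕ → ℝ) (k : ℕ) :
    compensator φ a ϖ (k + 1) = compensator φ a ϖ k + (φ k - ϖ k) / prodOneAdd a (k + 1) :=
  Finset.sum_range_succ _ _

lemma normalized_eq_div_add_compensator (ha : ∀ k, 0 ≤ a k) (k : ℕ) :
    normalized ψ φ a ϖ k =
      ((1 + a k) * ψ k - φ k + ϖ k) / prodOneAdd a (k + 1) + compensator φ a ϖ (k + 1) := by
  have hA := (prodOneAdd_pos ha k).ne'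
  have ha1 : 1 + a k ≠ 0 := by linarith [ha k]
  rw [normalized, compensator_succ, prodOneAdd_succ]
  field_simp
  ring

lemma neg_sum_le_normalized (hψ : ∀ k, 0 ≤ ψ k) (hφ : ∀ k, 0 ≤ φ k) (ha : ∀ k, 0 ≤ a k)
    (hϖ : ∀ k, 0 ≤ ϖ k) (k : ℕ) :
    -∑ i ∈ Finset.range k, ϖ i ≤ normalized ψ φ a ϖ k := by
  have hterm : ∀ j, -ϖ j ≤ (φ j - ϖ j) / prodOneAdd a (j + 1) := fun j =>
    calc -ϖ j ≤ -(ϖ j / prodOneAdd a (j + 1)) := neg_le_neg (div_prodOneAdd_le ha (hϖ j) _)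
      _ ≤ (φ j - ϖ j) / prodOneAdd a (j + 1) := by
        rw [sub_div]
        linarith [div_nonneg (hφ j) (prodOneAdd_pos ha (j + 1)).le]
  rw [normalized, compensator, ← Finset.sum_neg_distrib]
  have := Finset.sum_le_sum fun j (_ : j ∈ Finset.range k) => hterm j
  linarith [div_nonneg (hψ k) (prodOneAdd_pos ha k).le]

lemma summable_div_prodOneAdd_of_bddAbove (hψ : ∀ k, 0 ≤ ψ k) (hφ : ∀ k, 0 ≤ φ k)
    (ha : ∀ k, 0 ≤ a k) (hϖ : ∀ k, 0 ≤ ϖ k) (hϖs : Summable ϖ)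
    (hY : BddAbove (Set.range (normalized ψ φ a ϖ))) :
    Summable fun j => φ j / prodOneAdd a (j + 1) := by
  obtain ⟨B, hB⟩ := hY
  refine summable_of_sum_range_le (c := B + ∑' i, ϖ i)
    (fun j => div_nonneg (hφ j) (prodOneAdd_pos ha _).le) fun n => ?_
  have hϖn : ∑ j ∈ Finset.range n, ϖ j / prodOneAdd a (j + 1) ≤ ∑' i, ϖ i :=
    (Finset.sum_le_sum fun j _ => div_prodOneAdd_le ha (hϖ j) _).trans
      (hϖs.sum_le_tsum _ fun i _ => hϖ i)
  have hYn : normalized ψ φ a ϖ n ≤ B := hB (Set.mem_range_self n)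
  rw [normalized, compensator] at hYn
  simp only [sub_div, Finset.sum_sub_distrib] at hYn
  linarith [div_nonneg (hψ n) (prodOneAdd_pos ha n).le]

theorem summable_and_tendsto_of_tendsto_normalized (hψ : ∀ k, 0 ≤ ψ k) (hφ : ∀ k, 0 ≤ φ k)
    (ha : ∀ k, 0 ≤ a k) (hϖ : ∀ k, 0 ≤ ϖ k) (has : Summable a) (hϖs : Summable ϖ) {y : ℝ}
    (hY : Tendsto (normalized ψ φ a ϖ) atTop (𝓝 y)) :
    Summable φ ∧ ∃ c, 0 ≤ c ∧ Tendsto ψ atTop (𝓝 c) := by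
  set A := prodOneAdd a
  have hφA := summable_div_prodOneAdd_of_bddAbove hψ hφ ha hϖ hϖs hY.bddAbove_range
  have hA_le : ∀ k, A k ≤ ∏' j, (1 + a j) :=
    (monotone_prodOneAdd ha).ge_of_tendsto (tendsto_prodOneAdd has)
  refine ⟨hφA.mul_left (∏' j, (1 + a j)) |>.of_nonneg_of_le hφ fun j => ?_, ?_⟩
  · calc φ j = φ j / A (j + 1) * A (j + 1) := (div_mul_cancel₀ _ (prodOneAdd_pos ha _).ne').symm
      _ ≤ (∏' j, (1 + a j)) * (φ j / A (j + 1)) := by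
        rw [mul_comm]
        exact mul_le_mul_of_nonneg_right (hA_le _) (div_nonneg (hφ j) (prodOneAdd_pos ha _).le)
  have hϖA : Summable fun j => ϖ j / A (j + 1) :=
    hϖs.of_nonneg_of_le (fun j => div_nonneg (hϖ j) (prodOneAdd_pos ha _).le)
      fun j => div_prodOneAdd_le ha (hϖ j) _
  have hS : Tendsto (fun k => ∑ j ∈ Finset.range k, (φ j - ϖ j) / A (j + 1)) atTop
      (𝓝 (∑' j, (φ j - ϖ j) / A (j + 1))) := by
    simp only [sub_div]
    exact (hφA.sub hϖA).hasSum.tendsto_sum_nat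
  have hψ_lim : Tendsto ψ atTop
      (𝓝 ((y - ∑' j, (φ j - ϖ j) / A (j + 1)) * ∏' j, (1 + a j))) := by
    refine ((hY.sub hS).mul (tendsto_prodOneAdd has)).congr fun k => ?_
    simp only [normalized, compensator, A, add_sub_cancel_right]
    exact div_mul_cancel₀ _ (prodOneAdd_pos ha k).ne'
  exact ⟨_, ge_of_tendsto' hψ_lim hψ, hψ_lim⟩

end Deterministic

section Normalized

variable {Ω : Type*} {m0 : MeasurableSpace Ω} {μ : Measure Ω} {ℱ : Filtration ℕ m0}

variable {ψ φ a ϖ : ℕ → Ω → ℝ}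

lemma measurable_prodOneAdd (ha : Adapted ℱ a) {n k : ℕ} (hk : k ≤ n + 1) :
    Measurable[ℱ n] fun ω => prodOneAdd (a · ω) k :=
  Finset.measurable_prod _ fun j hj => measurable_const.add
    ((ha j).mono (ℱ.mono (by rw [Finset.mem_range] at hj; omega)) le_rfl)

lemma measurable_compensator (hφ : Adapted ℱ φ) (ha : Adapted ℱ a) (hϖ : Adapted ℱ ϖ)
    {n k : ℕ} (hk : k ≤ n + 1) :
    Measurable[ℱ n] fun ω => compensator (φ · ω) (a · ω) (ϖ · ω) k :=
  Finset.measurable_sum _ fun j hj => by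
    rw [Finset.mem_range] at hj
    exact (((hφ j).mono (ℱ.mono (by omega)) le_rfl).sub
      ((hϖ j).mono (ℱ.mono (by omega)) le_rfl)).div (measurable_prodOneAdd ha (by omega))

lemma integrable_div_prodOneAdd (ha0 : ∀ k ω, 0 ≤ a k ω) (ha : Adapted ℱ a) {X : Ω → ℝ}
    (hX : Integrable X μ) (k : ℕ) : Integrable (fun ω => X ω / prodOneAdd (a · ω) k) μ :=
  hX.mono (hX.aestronglyMeasurable.div₀
    ((measurable_prodOneAdd ha k.le_succ).mono (ℱ.le k) le_rfl).aestronglyMeasurable)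
    (ae_of_all _ fun ω => by
      rw [norm_div, Real.norm_of_nonneg (prodOneAdd_pos (ha0 · ω) k).le]
      exact div_prodOneAdd_le (ha0 · ω) (norm_nonneg _) k)

lemma integrable_compensator (ha0 : ∀ k ω, 0 ≤ a k ω) (ha : Adapted ℱ a)
    (hφ : ∀ k, Integrable (φ k) μ) (hϖ : ∀ k, Integrable (ϖ k) μ) (k : ℕ) :
    Integrable (fun ω => compensator (φ · ω) (a · ω) (ϖ · ω) k) μ :=
  integrable_finsetSum _ fun j _ =>
    integrable_div_prodOneAdd ha0 ha ((hφ j).sub (hϖ j)) (j + 1)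

theorem supermartingale_normalized [IsFiniteMeasure μ] (ha0 : ∀ k ω, 0 ≤ a k ω)
    (hψ : Adapted ℱ ψ) (hφ : Adapted ℱ φ) (ha : Adapted ℱ a) (hϖ : Adapted ℱ ϖ)
    (hψint : ∀ k, Integrable (ψ k) μ) (hφint : ∀ k, Integrable (φ k) μ)
    (hϖint : ∀ k, Integrable (ϖ k) μ)
    (hrec : ∀ k, μ[ψ (k + 1) | ℱ k] ≤ᵐ[μ] fun ω => (1 + a k ω) * ψ k ω - φ k ω + ϖ k ω) :
    Supermartingale (fun k ω => normalized (ψ · ω) (φ · ω) (a · ω) (ϖ · ω) k) ℱ μ := by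
  have hadapted : Adapted ℱ fun k ω => normalized (ψ · ω) (φ · ω) (a · ω) (ϖ · ω) k :=
    fun k => ((hψ k).div (measurable_prodOneAdd ha k.le_succ)).add
      (measurable_compensator hφ ha hϖ k.le_succ)
  refine supermartingale_nat hadapted.stronglyAdapted
    (fun k => (integrable_div_prodOneAdd ha0 ha (hψint k) k).add
      (integrable_compensator ha0 ha hφint hϖint k)) fun k => ?_
  set Ainv := fun ω => (prodOneAdd (a · ω) (k + 1))⁻¹
  set C := fun ω => compensator (φ · ω) (a · ω) (ϖ · ω) (k + 1)
  have hAinv : StronglyMeasurable[ℱ k] Ainv :=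
    (measurable_prodOneAdd ha le_rfl).inv.stronglyMeasurable
  have hsplit : (fun ω => normalized (ψ · ω) (φ · ω) (a · ω) (ϖ · ω) (k + 1)) =
      Ainv * ψ (k + 1) + C := by
    funext ω
    simp only [normalized, div_eq_inv_mul, Pi.add_apply, Pi.mul_apply, Ainv, C]
  have hAinv_le : ∀ ω, ‖Ainv ω‖ ≤ 1 := fun ω => by
    rw [norm_inv, Real.norm_of_nonneg (prodOneAdd_pos (ha0 · ω) _).le]
    exact inv_le_one_of_one_le₀ (one_le_prodOneAdd (ha0 · ω) _)
  have hpull : μ[Ainv * ψ (k + 1) | ℱ k] =ᵐ[μ] Ainv * μ[ψ (k + 1) | ℱ k] :=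
    condExp_stronglyMeasurable_mul_of_bound (ℱ.le k) hAinv (hψint _) 1 (ae_of_all _ hAinv_le)
  have hC : μ[C | ℱ k] = C := condExp_of_stronglyMeasurable (ℱ.le k)
    (measurable_compensator hφ ha hϖ le_rfl).stronglyMeasurable
    (integrable_compensator ha0 ha hφint hϖint _)
  have hAψ_int : Integrable (Ainv * ψ (k + 1)) μ :=
    (hψint (k + 1)).bdd_mul (hAinv.mono (ℱ.le k)).aestronglyMeasurable (ae_of_all _ hAinv_le)
  rw [hsplit]
  filter_upwards [condExp_add hAψ_int (integrable_compensator ha0 ha hφint hϖint (k + 1)) (ℱ k),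
    hpull, hrec k] with ω h1 h2 h3
  rw [h1, Pi.add_apply, h2, hC, Pi.mul_apply, normalized_eq_div_add_compensator (ha0 · ω),
    div_eq_inv_mul]
  exact add_le_add_left
    (mul_le_mul_of_nonneg_left h3 (inv_nonneg.2 (prodOneAdd_pos (ha0 · ω) _).le)) _

end Normalized

end RobbinsSiegmund

theorem robbins_siegmund_general
    {Ω : Type*} [m0 : MeasurableSpace Ω] (μ : Measure Ω) [IsProbabilityMeasure μ]
    (ℱ : Filtration ℕ m0)
    (ψ φ a ϖ : ℕ → Ω → ℝ)
    (hψnn : ∀ k ω, 0 ≤ ψ k ω) (hφnn : ∀ k ω, 0 ≤ φ k ω)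
    (hann : ∀ k ω, 0 ≤ a k ω) (hϖnn : ∀ k ω, 0 ≤ ϖ k ω)
    (hψad : Adapted ℱ ψ) (hφad : Adapted ℱ φ)
    (haad : Adapted ℱ a) (hϖad : Adapted ℱ ϖ)
    (hψint : ∀ k, Integrable (ψ k) μ) (hφint : ∀ k, Integrable (φ k) μ)
    (hϖint : ∀ k, Integrable (ϖ k) μ)
    (hrec : ∀ k, μ[ψ (k + 1) | ℱ k] ≤ᵐ[μ]
      fun ω => (1 + a k ω) * ψ k ω - φ k ω + ϖ k ω)
    (ha_sum : ∀ᵐ ω ∂μ, Summable fun k => a k ω)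
    (hϖ_sum : ∀ᵐ ω ∂μ, Summable fun k => ϖ k ω) :
    ∀ᵐ ω ∂μ, (Summable fun k => φ k ω) ∧
      ∃ c : ℝ, 0 ≤ c ∧ Tendsto (fun k => ψ k ω) atTop (nhds c) := by
  have hY := RobbinsSiegmund.supermartingale_normalized hann hψad hφad haad hϖad hψint hφint
    hϖint hrec
  have hY_lb : ∀ k ω, -∑ i ∈ Finset.range k, ϖ i ω ≤
      RobbinsSiegmund.normalized (ψ · ω) (φ · ω) (a · ω) (ϖ · ω) k := fun k ω =>
    RobbinsSiegmund.neg_sum_le_normalized (hψnn · ω) (hφnn · ω) (hann · ω) (hϖnn · ω) k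
  filter_upwards [hY.exists_ae_tendsto_of_summable hϖad hϖnn hY_lb, ha_sum, hϖ_sum]
    with ω hY_conv ha_sum_ω hϖ_sum_ω
  obtain ⟨y, hy⟩ := hY_conv hϖ_sum_ω
  exact RobbinsSiegmund.summable_and_tendsto_of_tendsto_normalized (hψnn · ω) (hφnn · ω)
    (hann · ω) (hϖnn · ω) ha_sum_ω hϖ_sum_ω hy

/-- Robbins–Siegmund: for nonnegative adapted random sequences with
`E[ψ^{k+1}|𝓕^k] ≤ (1 + a^k)ψ^k − φ^k + ϖ^k`, if `Σ a^k < ∞` and `Σ ϖ^k < ∞`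
almost surely, then almost surely `Σ φ^k < ∞` and `ψ^k` converges to a finite
nonnegative limit. -/
theorem robbins_siegmund
    {Ω : Type*} [m0 : MeasurableSpace Ω] (μ : Measure Ω) [IsProbabilityMeasure μ]
    (ℱ : Filtration ℕ m0)
    (ψ φ a ϖ : ℕ → Ω → ℝ)
    (hψnn : ∀ k ω, 0 ≤ ψ k ω) (hφnn : ∀ k ω, 0 ≤ φ k ω)
    (hann : ∀ k ω, 0 ≤ a k ω) (hϖnn : ∀ k ω, 0 ≤ ϖ k ω)
    (hψad : Adapted ℱ ψ) (hφad : Adapted ℱ φ)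
    (haad : Adapted ℱ a) (hϖad : Adapted ℱ ϖ)
    (hψint : ∀ k, Integrable (ψ k) μ) (hφint : ∀ k, Integrable (φ k) μ)
    (haint : ∀ k, Integrable (a k) μ) (hϖint : ∀ k, Integrable (ϖ k) μ)
    (hrec : ∀ k, μ[ψ (k + 1) | ℱ k] ≤ᵐ[μ]
      fun ω => (1 + a k ω) * ψ k ω - φ k ω + ϖ k ω)
    (ha_sum : ∀ᵐ ω ∂μ, Summable fun k => a k ω)
    (hϖ_sum : ∀ᵐ ω ∂μ, Summable fun k => ϖ k ω) :
    ∀ᵐ ω ∂μ, (Summable fun k => φ k ω) ∧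
      ∃ c : ℝ, 0 ≤ c ∧ Tendsto (fun k => ψ k ω) atTop (nhds c) :=
  robbins_siegmund_general (m0 := m0) μ ℱ ψ φ a ϖ hψnn hφnn hann hϖnn hψad hφad haad hϖad hψint
    hφint hϖint hrec ha_sum hϖ_sum
end

section
/- Under the stated DMPC setup, suppose at time t each subsystem i has a feasible solution, i.e., there are input sequences ũ_i(0),…,ũ_i(N−1) and state sequences x̃_i(0),…,x̃_i(N) with x̃_i(ℓ+1) = A_i x̃_i(ℓ) + B_i ũ_i(ℓ), x̃_i(ℓ) ∈ 𝒳_i and ũ_i(ℓ) ∈ 𝒰_i for ℓ = 0,…,N−1, x̃_i(N) ∈ 𝒳_i^f, and Σ_{i=1}^M ( Ψ_{x_i} x̃_i(ℓ) + Ψ_{u_i} ũ_i(ℓ) ) ≤ (1 − ε M ℓ) 1_p componentwise for ℓ = 0,…,N−1. Then the shifted sequences û_i(ℓ) := ũ_i(ℓ+1) for ℓ = 0,…,N−2 and û_i(N−1) := K_i x̃_i(N), with corresponding states x̂_i(0) := x̃_i(1), x̂_i(ℓ+1) = A_i x̂_i(ℓ) + B_i û_i(ℓ), form a feasible solution at time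 t+1: x̂_i(ℓ) ∈ 𝒳_i and û_i(ℓ) ∈ 𝒰_i for ℓ = 0,…,N−1, x̂_i(N) ∈ 𝒳_i^f, and Σ_{i=1}^M ( Ψ_{x_i} x̂_i(ℓ) + Ψ_{u_i} û_i(ℓ) ) ≤ (1 − ε M ℓ) 1_p for ℓ = 0,…,N−1. -/
set_option autoImplicit false

open Matrix Finset

/-!
The shifted candidate follows the old trajectory one step ahead, so up to time `N - 2` it
inherits every constraint from step `ℓ + 1` of the old solution, whose global bound
`1 - εM(ℓ+1)` is tighter than the required `1 - εMℓ`. At step `N - 1` the state is the old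
terminal state and the input is the terminal controller, so the terminal-set hypotheses
give the local constraints, invariance of `Xf` gives the new terminal constraint, and the
terminal global bound `1 - εMN` is tighter than `1 - εM(N-1)`.
-/

theorem Matrix.add_mul_mulVec {l m n α : Type*} [Fintype m] [Fintype n] [CommSemiring α]
    (A : Matrix l n α) (B : Matrix l m α) (K : Matrix m n α) (x : n → α) :
    (A + B * K) *ᵥ x = A *ᵥ x + B *ᵥ (K *ᵥ x) := by
  rw [add_mulVec, mulVec_mulVec]

theorem shifted_trajectory_eq {S I : Type*} (f : S → I → S) {N : ℕ} {x xh : ℕ → S}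
    {u uh : ℕ → I} (hx : ∀ ℓ < N, x (ℓ + 1) = f (x ℓ) (u ℓ)) (hxh0 : xh 0 = x 1)
    (hxh : ∀ ℓ, ℓ + 1 < N → xh (ℓ + 1) = f (xh ℓ) (uh ℓ))
    (huh : ∀ ℓ, ℓ + 1 < N → uh ℓ = u (ℓ + 1)) :
    ∀ ℓ < N, xh ℓ = x (ℓ + 1) := by
  intro ℓ hℓ
  induction ℓ with
  | zero => exact hxh0
  | succ k ih => rw [hxh k hℓ, ih (by omega), huh k hℓ, hx (k + 1) hℓ]

theorem dmpc_recursive_feasibility_general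
    (M N p : ℕ) (hN : 1 ≤ N)
    (n m : Fin M → ℕ)
    (A : ∀ i, Matrix (Fin (n i)) (Fin (n i)) ℝ)
    (B : ∀ i, Matrix (Fin (n i)) (Fin (m i)) ℝ)
    (K : ∀ i, Matrix (Fin (m i)) (Fin (n i)) ℝ)
    (X : ∀ i, Set (Fin (n i) → ℝ)) (U : ∀ i, Set (Fin (m i) → ℝ))
    (Xf : ∀ i, Set (Fin (n i) → ℝ))
    (Ψx : ∀ i, Matrix (Fin p) (Fin (n i)) ℝ)
    (Ψu : ∀ i, Matrix (Fin p) (Fin (m i)) ℝ)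
    (ε : ℝ) (hε0 : 0 ≤ ε)
    -- properties of the terminal sets
    (hXfX : ∀ i, Xf i ⊆ X i)
    (hXfU : ∀ i, ∀ z ∈ Xf i, (K i).mulVec z ∈ U i)
    (hXfInv : ∀ i, ∀ z ∈ Xf i, (A i + B i * K i).mulVec z ∈ Xf i)
    (hXfGlob : ∀ z : ∀ i, Fin (n i) → ℝ, (∀ i, z i ∈ Xf i) → ∀ q : Fin p,
      ∑ i, ((Ψx i + Ψu i * K i).mulVec (z i)) q ≤ 1 - ε * M * N)
    -- the feasible solution at time t
    (xt : ∀ i, ℕ → Fin (n i) → ℝ) (ut : ∀ i, ℕ → Fin (m i) → ℝ)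
    (hdyn : ∀ i, ∀ ℓ < N, xt i (ℓ + 1) = (A i).mulVec (xt i ℓ) + (B i).mulVec (ut i ℓ))
    (hxtX : ∀ i, ∀ ℓ < N, xt i ℓ ∈ X i)
    (hutU : ∀ i, ∀ ℓ < N, ut i ℓ ∈ U i)
    (hxtN : ∀ i, xt i N ∈ Xf i)
    (hglob : ∀ ℓ < N, ∀ q : Fin p,
      ∑ i, (((Ψx i).mulVec (xt i ℓ)) q + ((Ψu i).mulVec (ut i ℓ)) q) ≤ 1 - ε * M * ℓ)
    -- the shifted candidate solution for time t+1
    (xh : ∀ i, ℕ → Fin (n i) → ℝ) (uh : ∀ i, ℕ → Fin (m i) → ℝ)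
    (huh : ∀ i, ∀ ℓ, ℓ + 1 < N → uh i ℓ = ut i (ℓ + 1))
    (huhN : ∀ i, uh i (N - 1) = (K i).mulVec (xt i N))
    (hxh0 : ∀ i, xh i 0 = xt i 1)
    (hxhdyn : ∀ i, ∀ ℓ < N, xh i (ℓ + 1) = (A i).mulVec (xh i ℓ) + (B i).mulVec (uh i ℓ)) :
    (∀ i, ∀ ℓ < N, xh i ℓ ∈ X i) ∧
    (∀ i, ∀ ℓ < N, uh i ℓ ∈ U i) ∧
    (∀ i, xh i N ∈ Xf i) ∧
    (∀ ℓ < N, ∀ q : Fin p,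
      ∑ i, (((Ψx i).mulVec (xh i ℓ)) q + ((Ψu i).mulVec (uh i ℓ)) q) ≤ 1 - ε * M * ℓ) := by
  have hshift (i) : ∀ ℓ < N, xh i ℓ = xt i (ℓ + 1) :=
    shifted_trajectory_eq (fun x u ↦ A i *ᵥ x + B i *ᵥ u) (hdyn i) (hxh0 i) (fun ℓ hℓ ↦ hxhdyn i ℓ (by omega)) (huh i)
  have hxhN1 (i) : xh i (N - 1) = xt i N := by
    rw [hshift i _ (by omega), Nat.sub_add_cancel hN]
  have hxhN (i) : xh i N = (A i + B i * K i) *ᵥ xt i N := by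
    rw [add_mul_mulVec, ← huhN, ← hxhN1, ← hxhdyn i _ (by omega), Nat.sub_add_cancel hN]
  refine ⟨fun i ℓ hℓ ↦ ?_, fun i ℓ hℓ ↦ ?_, fun i ↦ hxhN i ▸ hXfInv i _ (hxtN i), ?_⟩
  · obtain h | rfl : ℓ + 1 < N ∨ ℓ = N - 1 := by omega
    · exact hshift i ℓ hℓ ▸ hxtX i _ h
    · exact hxhN1 i ▸ hXfX i (hxtN i)
  · obtain h | rfl : ℓ + 1 < N ∨ ℓ = N - 1 := by omega
    · exact huh i ℓ h ▸ hutU i _ h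
    · exact huhN i ▸ hXfU i _ (hxtN i)
  intro ℓ hℓ q
  obtain h | rfl : ℓ + 1 < N ∨ ℓ = N - 1 := by omega
  · simp only [hshift _ ℓ hℓ, huh _ ℓ h]
    exact (hglob _ h q).trans (by gcongr; omega)
  · simp only [hxhN1, huhN, ← Pi.add_apply, ← add_mul_mulVec]
    exact (hXfGlob _ hxtN q).trans (by gcongr)

/-- recursive feasibility of the shifted DMPC candidate solution.
If at time `t` the sequences `(x̃_i, ũ_i)` are feasible (local state/input
constraints, terminal constraint, and tightened global constraints), then the
one-step shifted sequences `(x̂_i, û_i)`, completed with the terminal controller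
`û_i(N−1) = K_i x̃_i(N)`, are feasible at time `t+1`. -/
theorem dmpc_recursive_feasibility
    (M N p : ℕ) (hM : 0 < M) (hN : 1 ≤ N)
    (n m : Fin M → ℕ)
    (A : ∀ i, Matrix (Fin (n i)) (Fin (n i)) ℝ)
    (B : ∀ i, Matrix (Fin (n i)) (Fin (m i)) ℝ)
    (K : ∀ i, Matrix (Fin (m i)) (Fin (n i)) ℝ)
    (X : ∀ i, Set (Fin (n i) → ℝ)) (U : ∀ i, Set (Fin (m i) → ℝ))
    (Xf : ∀ i, Set (Fin (n i) → ℝ))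
    (Ψx : ∀ i, Matrix (Fin p) (Fin (n i)) ℝ)
    (Ψu : ∀ i, Matrix (Fin p) (Fin (m i)) ℝ)
    (ε : ℝ) (hε0 : 0 ≤ ε) (hε1 : ε < 1 / (M * N))
    -- properties of the terminal sets
    (hXfX : ∀ i, Xf i ⊆ X i)
    (hXfU : ∀ i, ∀ z ∈ Xf i, (K i).mulVec z ∈ U i)
    (hXfInv : ∀ i, ∀ z ∈ Xf i, (A i + B i * K i).mulVec z ∈ Xf i)
    (hXfGlob : ∀ z : ∀ i, Fin (n i) → ℝ, (∀ i, z i ∈ Xf i) → ∀ q : Fin p,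
      ∑ i, ((Ψx i + Ψu i * K i).mulVec (z i)) q ≤ 1 - ε * M * N)
    -- the feasible solution at time t
    (xt : ∀ i, ℕ → Fin (n i) → ℝ) (ut : ∀ i, ℕ → Fin (m i) → ℝ)
    (hdyn : ∀ i, ∀ ℓ < N, xt i (ℓ + 1) = (A i).mulVec (xt i ℓ) + (B i).mulVec (ut i ℓ))
    (hxtX : ∀ i, ∀ ℓ < N, xt i ℓ ∈ X i)
    (hutU : ∀ i, ∀ ℓ < N, ut i ℓ ∈ U i)
    (hxtN : ∀ i, xt i N ∈ Xf i)
    (hglob : ∀ ℓ < N, ∀ q : Fin p,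
      ∑ i, (((Ψx i).mulVec (xt i ℓ)) q + ((Ψu i).mulVec (ut i ℓ)) q) ≤ 1 - ε * M * ℓ)
    -- the shifted candidate solution for time t+1
    (xh : ∀ i, ℕ → Fin (n i) → ℝ) (uh : ∀ i, ℕ → Fin (m i) → ℝ)
    (huh : ∀ i, ∀ ℓ, ℓ + 1 < N → uh i ℓ = ut i (ℓ + 1))
    (huhN : ∀ i, uh i (N - 1) = (K i).mulVec (xt i N))
    (hxh0 : ∀ i, xh i 0 = xt i 1)
    (hxhdyn : ∀ i, ∀ ℓ < N, xh i (ℓ + 1) = (A i).mulVec (xh i ℓ) + (B i).mulVec (uh i ℓ)) :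
    (∀ i, ∀ ℓ < N, xh i ℓ ∈ X i) ∧
    (∀ i, ∀ ℓ < N, uh i ℓ ∈ U i) ∧
    (∀ i, xh i N ∈ Xf i) ∧
    (∀ ℓ < N, ∀ q : Fin p,
      ∑ i, (((Ψx i).mulVec (xh i ℓ)) q + ((Ψu i).mulVec (uh i ℓ)) q) ≤ 1 - ε * M * ℓ) :=
  dmpc_recursive_feasibility_general M N p hN n m A B K X U Xf Ψx Ψu ε hε0 hXfX hXfU hXfInv hXfGlob
    xt ut hdyn hxtX hutU hxtN hglob xh uh huh huhN hxh0 hxhdyn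
end

section
/- Let A ∈ ℝ^{n×n}, B ∈ ℝ^{n×m}, K ∈ ℝ^{m×n}, and let Q ∈ ℝ^{n×n}, R ∈ ℝ^{m×m}, P ∈ ℝ^{n×n} be symmetric matrices satisfying the Lyapunov/Riccati identity (A + BK)ᵀ P (A + BK) − P = −(Q + Kᵀ R K). Given inputs u(0),…,u(N−1) ∈ ℝ^m and states defined by x(ℓ+1) = A x(ℓ) + B u(ℓ), define the cost J(x(0), u) := Σ_{ℓ=0}^{N−1} ( x(ℓ)ᵀ Q x(ℓ) + u(ℓ)ᵀ R u(ℓ) ) + x(N)ᵀ P x(N). Let the shifted input sequence be û(ℓ) := u(ℓ+1) for ℓ = 0,…,N−2 and û(N−1) := K x(N), with states starting from x(1). Then J(x(1), û) − J(x(0), u) = −x(0)ᵀ Q x(0) − u(0)ᵀ R u(0). -/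
set_option autoImplicit false

open Matrix Finset

/-!
Along the shifted trajectory the states are `x(1), …, x(N)` and the inputs `u(1), …, u(N-1)`,
so the two running sums share all stage costs except the first of the old one and the last
of the new one. The new terminal state is `(A + BK) x(N)`, and the Lyapunov identity turns its
terminal cost into `x(N)ᵀ P x(N)` minus exactly that last stage cost
`x(N)ᵀ Q x(N) + (K x(N))ᵀ R (K x(N))`.
-/

theorem dotProduct_mulVec_transpose_mul_mul {α ι κ : Type*} [CommSemiring α]
    [Fintype ι] [Fintype κ] (C : Matrix κ ι α) (M : Matrix κ κ α) (v : ι → α) :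
    v ⬝ᵥ (Cᵀ * M * C) *ᵥ v = C *ᵥ v ⬝ᵥ M *ᵥ C *ᵥ v := by
  rw [Matrix.mul_assoc, ← mulVec_mulVec, dotProduct_mulVec, vecMul_transpose, mulVec_mulVec]

theorem closedLoop_quadForm_eq {α ι κ : Type*} [CommRing α] [Fintype ι] [Fintype κ]
    [DecidableEq ι] {A P Q : Matrix ι ι α} {B : Matrix ι κ α} {K : Matrix κ ι α}
    {R : Matrix κ κ α} (hLyap : (A + B * K)ᵀ * P * (A + B * K) - P = -(Q + Kᵀ * R * K))
    (v : ι → α) :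
    (A + B * K) *ᵥ v ⬝ᵥ P *ᵥ (A + B * K) *ᵥ v
      = v ⬝ᵥ P *ᵥ v - (v ⬝ᵥ Q *ᵥ v + K *ᵥ v ⬝ᵥ R *ᵥ K *ᵥ v) := by
  have hclosed : (A + B * K)ᵀ * P * (A + B * K) = P - (Q + Kᵀ * R * K) := by
    rw [sub_eq_iff_eq_add.mp hLyap, neg_add_eq_sub]
  rw [← dotProduct_mulVec_transpose_mul_mul, hclosed, ← dotProduct_mulVec_transpose_mul_mul,
    sub_mulVec, add_mulVec, dotProduct_sub, dotProduct_add]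

theorem shifted_trajectory_eq_s12 {σ β : Type*} (f : σ → β → σ) {x xh : ℕ → σ} {u uh : ℕ → β}
    {M : ℕ} (hdyn : ∀ ℓ, x (ℓ + 1) = f (x ℓ) (u ℓ)) (hxh0 : xh 0 = x 1)
    (hxhdyn : ∀ ℓ, xh (ℓ + 1) = f (xh ℓ) (uh ℓ)) (huh : ∀ ℓ, ℓ < M → uh ℓ = u (ℓ + 1)) :
    ∀ ℓ, ℓ ≤ M → xh ℓ = x (ℓ + 1)
  | 0, _ => hxh0
  | ℓ + 1, hℓ => by
    rw [hxhdyn, shifted_trajectory_eq_s12 f hdyn hxh0 hxhdyn huh ℓ (by omega), huh ℓ hℓ, ← hdyn]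

theorem shifted_cost_decrease_general
    (n m N : ℕ) (hN : 1 ≤ N)
    (A : Matrix (Fin n) (Fin n) ℝ) (B : Matrix (Fin n) (Fin m) ℝ)
    (K : Matrix (Fin m) (Fin n) ℝ)
    (Q P : Matrix (Fin n) (Fin n) ℝ) (R : Matrix (Fin m) (Fin m) ℝ)
    (hRiccati : (A + B * K)ᵀ * P * (A + B * K) - P = -(Q + Kᵀ * R * K))
    (x : ℕ → Fin n → ℝ) (u : ℕ → Fin m → ℝ)
    (hdyn : ∀ ℓ, x (ℓ + 1) = A.mulVec (x ℓ) + B.mulVec (u ℓ))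
    (uh : ℕ → Fin m → ℝ) (xh : ℕ → Fin n → ℝ)
    (huh : ∀ ℓ, ℓ + 1 < N → uh ℓ = u (ℓ + 1))
    (huhN : uh (N - 1) = K.mulVec (x N))
    (hxh0 : xh 0 = x 1)
    (hxhdyn : ∀ ℓ, xh (ℓ + 1) = A.mulVec (xh ℓ) + B.mulVec (uh ℓ)) :
    ((∑ ℓ ∈ range N, (xh ℓ ⬝ᵥ Q.mulVec (xh ℓ) + uh ℓ ⬝ᵥ R.mulVec (uh ℓ)))
        + xh N ⬝ᵥ P.mulVec (xh N))
      - ((∑ ℓ ∈ range N, (x ℓ ⬝ᵥ Q.mulVec (x ℓ) + u ℓ ⬝ᵥ R.mulVec (u ℓ)))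
        + x N ⬝ᵥ P.mulVec (x N))
      = -(x 0 ⬝ᵥ Q.mulVec (x 0)) - u 0 ⬝ᵥ R.mulVec (u 0) := by
  obtain ⟨M, rfl⟩ : ∃ M, N = M + 1 := ⟨N - 1, by omega⟩
  have hxh := shifted_trajectory_eq_s12 (M := M) (fun v w ↦ A *ᵥ v + B *ᵥ w) hdyn hxh0 hxhdyn
    fun ℓ hℓ ↦ huh ℓ (by omega)
  have huhM : uh M = K *ᵥ x (M + 1) := huhN
  have hterminal : xh (M + 1) = (A + B * K) *ᵥ x (M + 1) := by
    rw [hxhdyn, hxh M le_rfl, huhM, add_mulVec, mulVec_mulVec]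
  have hcommon : ∑ ℓ ∈ range M, (xh ℓ ⬝ᵥ Q *ᵥ xh ℓ + uh ℓ ⬝ᵥ R *ᵥ uh ℓ)
      = ∑ ℓ ∈ range M, (x (ℓ + 1) ⬝ᵥ Q *ᵥ x (ℓ + 1) + u (ℓ + 1) ⬝ᵥ R *ᵥ u (ℓ + 1)) :=
    sum_congr rfl fun ℓ hℓ ↦ by
      rw [mem_range] at hℓ
      rw [hxh ℓ hℓ.le, huh ℓ (by omega)]
  rw [sum_range_succ, sum_range_succ', hcommon, hxh M le_rfl, huhM, hterminal,
    closedLoop_quadForm_eq hRiccati]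
  ring

/-- one-step shift identity for the MPC cost under the
Lyapunov/Riccati identity `(A+BK)ᵀ P (A+BK) − P = −(Q + Kᵀ R K)`:
`J(x(1), û) − J(x(0), u) = −x(0)ᵀ Q x(0) − u(0)ᵀ R u(0)`. -/
theorem shifted_cost_decrease
    (n m N : ℕ) (hN : 1 ≤ N)
    (A : Matrix (Fin n) (Fin n) ℝ) (B : Matrix (Fin n) (Fin m) ℝ)
    (K : Matrix (Fin m) (Fin n) ℝ)
    (Q P : Matrix (Fin n) (Fin n) ℝ) (R : Matrix (Fin m) (Fin m) ℝ)
    (hQ : Q.IsSymm) (hR : R.IsSymm) (hP : P.IsSymm)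
    (hRiccati : (A + B * K)ᵀ * P * (A + B * K) - P = -(Q + Kᵀ * R * K))
    (x : ℕ → Fin n → ℝ) (u : ℕ → Fin m → ℝ)
    (hdyn : ∀ ℓ, x (ℓ + 1) = A.mulVec (x ℓ) + B.mulVec (u ℓ))
    (uh : ℕ → Fin m → ℝ) (xh : ℕ → Fin n → ℝ)
    (huh : ∀ ℓ, ℓ + 1 < N → uh ℓ = u (ℓ + 1))
    (huhN : uh (N - 1) = K.mulVec (x N))
    (hxh0 : xh 0 = x 1)
    (hxhdyn : ∀ ℓ, xh (ℓ + 1) = A.mulVec (xh ℓ) + B.mulVec (uh ℓ)) :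
    ((∑ ℓ ∈ range N, (xh ℓ ⬝ᵥ Q.mulVec (xh ℓ) + uh ℓ ⬝ᵥ R.mulVec (uh ℓ)))
        + xh N ⬝ᵥ P.mulVec (xh N))
      - ((∑ ℓ ∈ range N, (x ℓ ⬝ᵥ Q.mulVec (x ℓ) + u ℓ ⬝ᵥ R.mulVec (u ℓ)))
        + x N ⬝ᵥ P.mulVec (x N))
      = -(x 0 ⬝ᵥ Q.mulVec (x 0)) - u 0 ⬝ᵥ R.mulVec (u 0) :=
  shifted_cost_decrease_general n m N hN A B K Q P R hRiccati x u hdyn uh xh huh huhN hxh0 hxhdyn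
end
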